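/- Let mu be a Borel measure on R^n and let A be the union of the n+1 dyadic filtrations from Theorem A with covering constant c_n. If beta > (c_n * alpha)^n with alpha > 1, then for mu-almost every x in R^n there is a sequence of (alpha, beta)-doubling cubes Q_j in A with x in Q_j and l(Q_j) < 2^{-j} for all j. -/

import Mathlib

/-
Suppose no cube of `𝒜` of side `< L` containing `x` is `(α, β)`-doubling, and fix `G` with
`c_n α < G` and `G^n < β`. For such a cube `Q` the covering property gives a cube `Q' ⊇ αQ` of `𝒜`
of side between `α ℓ(Q)` and `G ℓ(Q)`, and `μ(Q') ≥ μ(αQ) > β μ(Q)`. Climbing from a cube `Q` of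
side `s` until the side is comparable to `L` takes `K` steps with `G^K s ≥ L` and ends at a
stopping cube `T` with `μ(Q) ≤ β^{1-K} μ(T) ≤ (s / L)^n ρ^{-N} β μ(T)`, where `ρ = β / G^n > 1`
and `G^N s < L`. Over a bounded region there are finitely many stopping cubes, each of finite
measure, and each contains at most `(L / s)^n` cubes of side `s` of one filtration; summing gives
`μ(bad set) ≤ ρ^{-N} β ∑ μ(T)` for every `N`, hence zero.
-/

open MeasureTheory

/-- An axis-parallel half-open cube in `ℝⁿ`, given by its lower corner `c`
and its side length `s`. -/
structure Cube (n : ℕ) where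
  c : EuclideanSpace ℝ (Fin n)
  s : ℝ

/-- The set of points of a cube: `∏ᵢ [cᵢ, cᵢ + s)`. -/
def Cube.set {n : ℕ} (Q : Cube n) : Set (EuclideanSpace ℝ (Fin n)) :=
  {y | ∀ i, Q.c i ≤ y i ∧ y i < Q.c i + Q.s}

/-- The concentric dilate `tQ` of a cube `Q`. -/
noncomputable def Cube.dilate {n : ℕ} (Q : Cube n) (t : ℝ) : Cube n :=
  ⟨WithLp.toLp 2 (fun i => Q.c i - (t - 1) * Q.s / 2), t * Q.s⟩

/-- A dyadic filtration of `ℝⁿ`: every cube has side length `2^{-k}` for some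
`k ∈ ℤ`, the cubes of each generation `k` partition `ℝⁿ`, and any two cubes
of the family are nested or disjoint. -/
def IsDyadicFiltration {n : ℕ} (F : Set (Cube n)) : Prop :=
  (∀ Q ∈ F, ∃ k : ℤ, Q.s = (2 : ℝ) ^ (-k)) ∧
  (∀ k : ℤ, ∀ x : EuclideanSpace ℝ (Fin n),
    ∃! Q : Cube n, Q ∈ F ∧ Q.s = (2 : ℝ) ^ (-k) ∧ x ∈ Q.set) ∧
  (∀ Q ∈ F, ∀ Q' ∈ F, Q.set ⊆ Q'.set ∨ Q'.set ⊆ Q.set ∨ Q.set ∩ Q'.set = ∅)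

/-- `pn n` is the smallest odd integer strictly greater than `n`. -/
def pn (n : ℕ) : ℕ := if n % 2 = 0 then n + 1 else n + 2

/-- The covering constant `c_n = 2 pₙ √n` of Theorem A. -/
noncomputable def cN (n : ℕ) : ℝ := 2 * pn n * Real.sqrt n

/-- The dyadic (nondoubling) maximal function associated to a family `A` of
cubes: `M f (x) = sup_{x ∈ Q ∈ A} μ(2Q)⁻¹ ∫_Q |f| dμ`. -/
noncomputable def maxFn {n : ℕ} (μ : Measure (EuclideanSpace ℝ (Fin n)))
    (A : Set (Cube n)) (f : EuclideanSpace ℝ (Fin n) → ℝ)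
    (x : EuclideanSpace ℝ (Fin n)) : ENNReal :=
  ⨆ Q ∈ A, ⨆ _ : x ∈ Q.set,
    (μ (Q.dilate 2).set)⁻¹ * ∫⁻ y in Q.set, ENNReal.ofReal |f y| ∂μ

open Classical in
/-- Weights `w_j = χ_{Q_j} / ∑ₖ χ_{Q_k}`. -/
noncomputable def wfun {n J : ℕ} (Q : Fin J → Cube n) (j : Fin J)
    (x : EuclideanSpace ℝ (Fin n)) : ℝ :=
  (if x ∈ (Q j).set then (1 : ℝ) else 0) /
    (∑ i : Fin J, if x ∈ (Q i).set then (1 : ℝ) else 0)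

open Metric Filter Topology

namespace Cube

variable {n : ℕ}

noncomputable def center (Q : Cube n) : EuclideanSpace ℝ (Fin n) :=
  WithLp.toLp 2 fun i => Q.c i + Q.s / 2

lemma dilate_s (Q : Cube n) (t : ℝ) : (Q.dilate t).s = t * Q.s := rfl

lemma center_dilate (Q : Cube n) (t : ℝ) : (Q.dilate t).center = Q.center := by
  ext i
  simp only [center, dilate]
  ring

lemma set_eq_univ_of_dim_zero (Q : Cube 0) : Q.set = Set.univ :=
  Set.eq_univ_of_forall fun _ i => i.elim0

lemma side_pos_of_nonempty (hn : 0 < n) {Q : Cube n} (hQ : Q.set.Nonempty) : 0 < Q.s := by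
  obtain ⟨y, hy⟩ := hQ
  have := hy ⟨0, hn⟩
  linarith

lemma subset_dilate {Q : Cube n} (hs : 0 ≤ Q.s) {t : ℝ} (ht : 1 ≤ t) :
    Q.set ⊆ (Q.dilate t).set := by
  intro y hy i
  have h := hy i
  have : 0 ≤ (t - 1) * Q.s := mul_nonneg (by linarith) hs
  simp only [dilate]
  constructor <;> nlinarith

lemma set_subset_closedBall {Q : Cube n} (hs : 0 ≤ Q.s) :
    Q.set ⊆ closedBall Q.center (Q.s * √n / 2) := by
  intro y hy
  have hcoord : ∀ i, dist (y i) (Q.center i) ^ 2 ≤ (Q.s / 2) ^ 2 := fun i => by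
    rw [Real.dist_eq, sq_abs]
    have := hy i
    simp only [center]
    apply sq_le_sq' <;> linarith
  rw [mem_closedBall, EuclideanSpace.dist_eq]
  calc √(∑ i, dist (y i) (Q.center i) ^ 2) ≤ √(n * (Q.s / 2) ^ 2) := by
        gcongr
        simpa using Finset.sum_le_sum fun i (_ : i ∈ Finset.univ) => hcoord i
    _ = Q.s * √n / 2 := by
        rw [Real.sqrt_mul (Nat.cast_nonneg n), Real.sqrt_sq (by positivity)]
        ring

lemma isBounded_set {Q : Cube n} (hs : 0 ≤ Q.s) : Bornology.IsBounded Q.set :=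
  isBounded_closedBall.subset (set_subset_closedBall hs)

lemma dist_corner_add_const {Q : Cube n} {t : ℝ} (ht : 0 ≤ t) :
    dist Q.c (WithLp.toLp 2 fun i => Q.c i + t) = t * √n := by
  simp [EuclideanSpace.dist_eq, Real.sqrt_sq ht, mul_comm]

lemma diam_set {Q : Cube n} (hs : 0 < Q.s) : diam Q.set = Q.s * √n := by
  refine le_antisymm ?_ ?_
  · calc diam Q.set ≤ diam (closedBall Q.center (Q.s * √n / 2)) :=
          diam_mono (set_subset_closedBall hs.le) isBounded_closedBall
      _ ≤ Q.s * √n := by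
          linarith [diam_closedBall (x := Q.center) (by positivity : 0 ≤ Q.s * √n / 2)]
  · -- the corner `c` and the points `c + t (1, …, 1)`, `t < s`, all lie in the cube
    refine le_of_tendsto (x := 𝓝[<] Q.s)
      ((continuous_mul_const √n).tendsto Q.s |>.mono_left nhdsWithin_le_nhds) ?_
    filter_upwards [Ioo_mem_nhdsLT hs] with t ht
    rw [← dist_corner_add_const ht.1.le]
    exact dist_le_diam_of_mem (isBounded_set hs.le) (fun i => ⟨le_rfl, by linarith⟩)
      fun i => ⟨by simp [ht.1.le], by simp [ht.2]⟩

lemma set_eq_preimage (Q : Cube n) : Q.set = (MeasurableEquiv.toLp 2 (Fin n → ℝ)).symm ⁻¹'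
    Set.univ.pi fun i => Set.Ico (Q.c i) (Q.c i + Q.s) := by
  ext y
  simp [Cube.set, Set.mem_pi]

lemma measurableSet_set (Q : Cube n) : MeasurableSet Q.set := by
  rw [set_eq_preimage]
  exact (MeasurableEquiv.toLp 2 (Fin n → ℝ)).symm.measurable
    (MeasurableSet.univ_pi fun _ => measurableSet_Ico)

lemma volume_set (Q : Cube n) : volume Q.set = ENNReal.ofReal Q.s ^ n := by
  rw [set_eq_preimage,
    (EuclideanSpace.volume_preserving_symm_measurableEquiv_toLp (Fin n)).measure_preimage
      (MeasurableSet.univ_pi fun _ => measurableSet_Ico).nullMeasurableSet, volume_pi_pi]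
  simp [Real.volume_Ico]

lemma card_mul_le_volume {F : Finset (Cube n)} {s : ℝ} (hside : ∀ Q ∈ F, Q.s = s)
    (hdisj : (F : Set (Cube n)).PairwiseDisjoint Cube.set) {W : Set (EuclideanSpace ℝ (Fin n))}
    (hW : ∀ Q ∈ F, Q.set ⊆ W) :
    F.card * ENNReal.ofReal s ^ n ≤ volume W :=
  calc F.card * ENNReal.ofReal s ^ n = ∑ Q ∈ F, volume Q.set := by
        rw [Finset.sum_congr rfl fun Q hQ => by rw [volume_set, hside Q hQ], Finset.sum_const,
          nsmul_eq_mul]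
    _ = volume (⋃ Q ∈ F, Q.set) :=
        (measure_biUnion_finset hdisj fun Q _ => Q.measurableSet_set).symm
    _ ≤ volume W := measure_mono (Set.iUnion₂_subset hW)

lemma finite_of_pairwiseDisjoint {𝒮 : Set (Cube n)} {s : ℝ} (hs : 0 < s)
    (hside : ∀ Q ∈ 𝒮, Q.s = s) (hdisj : 𝒮.PairwiseDisjoint Cube.set)
    {W : Set (EuclideanSpace ℝ (Fin n))} (hW : ∀ Q ∈ 𝒮, Q.set ⊆ W) (hWvol : volume W ≠ ⊤) :
    𝒮.Finite := by
  by_contra h𝒮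
  obtain ⟨m, hm⟩ := ENNReal.exists_nat_mul_gt (pow_ne_zero n (ENNReal.ofReal_pos.2 hs).ne') hWvol
  obtain ⟨F, hF, rfl⟩ := Set.Infinite.exists_subset_card_eq h𝒮 m
  exact hm.not_ge (card_mul_le_volume (fun Q hQ => hside Q (hF hQ)) (hdisj.subset hF)
    fun Q hQ => hW Q (hF hQ))

lemma mul_measure_biUnion_le {μ : Measure (EuclideanSpace ℝ (Fin n))} {𝒮 : Set (Cube n)}
    {s : ℝ} (hs : 0 < s) (hside : ∀ Q ∈ 𝒮, Q.s = s) (hdisj : 𝒮.PairwiseDisjoint Cube.set)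
    {W : Set (EuclideanSpace ℝ (Fin n))} (hW : ∀ Q ∈ 𝒮, Q.set ⊆ W) (hWvol : volume W ≠ ⊤)
    {c b : ENNReal} (hb : ∀ Q ∈ 𝒮, c * μ Q.set ≤ b) :
    c * ENNReal.ofReal s ^ n * μ (⋃ Q ∈ 𝒮, Q.set) ≤ volume W * b := by
  have h𝒮 := finite_of_pairwiseDisjoint hs hside hdisj hW hWvol
  have hF : ∀ Q ∈ h𝒮.toFinset, Q ∈ 𝒮 := fun Q => h𝒮.mem_toFinset.1
  have hcard := card_mul_le_volume (fun Q hQ => hside Q (hF Q hQ))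
    (by rwa [h𝒮.coe_toFinset]) fun Q hQ => hW Q (hF Q hQ)
  calc c * ENNReal.ofReal s ^ n * μ (⋃ Q ∈ 𝒮, Q.set)
      ≤ ENNReal.ofReal s ^ n * ∑ Q ∈ h𝒮.toFinset, c * μ Q.set := by
        rw [mul_comm c, mul_assoc, ← Finset.mul_sum]
        gcongr
        simpa only [h𝒮.mem_toFinset] using measure_biUnion_finset_le h𝒮.toFinset Cube.set
    _ ≤ ENNReal.ofReal s ^ n * (h𝒮.toFinset.card * b) := by
        gcongr
        simpa using Finset.sum_le_sum fun Q hQ => hb Q (hF Q hQ)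
    _ ≤ volume W * b := by
        rw [← mul_assoc, mul_comm (ENNReal.ofReal s ^ n)]
        gcongr

end Cube

namespace IsDyadicFiltration

variable {n : ℕ} {F : Set (Cube n)}

lemma side_pos (hF : IsDyadicFiltration F) {Q : Cube n} (hQ : Q ∈ F) : 0 < Q.s := by
  obtain ⟨k, hk⟩ := hF.1 Q hQ
  exact hk ▸ zpow_pos two_pos _

lemma pairwiseDisjoint (hF : IsDyadicFiltration F) (k : ℤ) :
    {Q | Q ∈ F ∧ Q.s = (2 : ℝ) ^ (-k)}.PairwiseDisjoint Cube.set := by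
  intro Q hQ Q' hQ' hne
  refine Set.disjoint_left.2 fun x hx hx' => hne ?_
  obtain ⟨_, _, huniq⟩ := hF.2.1 k x
  exact (huniq Q ⟨hQ.1, hQ.2, hx⟩).trans (huniq Q' ⟨hQ'.1, hQ'.2, hx'⟩).symm

end IsDyadicFiltration

lemma finite_setOf_two_zpow_mem_Icc {a b : ℝ} (ha : 0 < a) :
    {k : ℤ | (2 : ℝ) ^ (-k) ∈ Set.Icc a b}.Finite := by
  obtain ⟨p, hp⟩ := exists_pow_lt_of_lt_one ha (by norm_num : (2⁻¹ : ℝ) < 1)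
  obtain ⟨q, hq⟩ := pow_unbounded_of_one_lt b (by norm_num : (1 : ℝ) < 2)
  refine (Set.finite_Icc (-(q : ℤ)) p).subset fun k ⟨hak, hkb⟩ => ⟨?_, ?_⟩
  · have : (2 : ℝ) ^ (-k) < 2 ^ (q : ℤ) := by rw [zpow_natCast]; linarith
    have := (zpow_lt_zpow_iff_right₀ one_lt_two).1 this
    omega
  · have : (2 : ℝ) ^ (-(p : ℤ)) < 2 ^ (-k) := by rw [zpow_neg, zpow_natCast, ← inv_pow]; linarith
    have := (zpow_lt_zpow_iff_right₀ one_lt_two).1 this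
    omega

lemma ENNReal.eq_zero_of_forall_pow_mul_le {a b ρ : ENNReal} (hρ : 1 < ρ) (hb : b ≠ ⊤)
    (h : ∀ N : ℕ, ρ ^ N * a ≤ b) : a = 0 := by
  have hlim : Tendsto (fun N : ℕ => b * ρ⁻¹ ^ N) atTop (𝓝 0) := by
    simpa using ENNReal.Tendsto.const_mul
      (ENNReal.tendsto_pow_atTop_nhds_zero_iff.2 (ENNReal.inv_lt_one.2 hρ)) (Or.inr hb)
  refine le_antisymm (ge_of_tendsto' hlim fun N => ?_) bot_le
  rw [← ENNReal.inv_pow, ← div_eq_mul_inv,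
    ENNReal.le_div_iff_mul_le (by simp [(zero_lt_one.trans hρ).ne']) (by simp [hb]), mul_comm]
  exact h N

lemma div_pow_mul_pow_le_pow {G β s L : ℝ} {n N K : ℕ} (hG : 1 ≤ G) (hs : 0 < s)
    (hβ : G ^ n ≤ β) (hN : G ^ N * s < L) (hK : L ≤ G ^ K * s) :
    (L / s) ^ n * (β / G ^ n) ^ N ≤ β ^ K := by
  have hG0 : 0 < G := by linarith
  have hNK : N ≤ K := by
    by_contra! h
    have := pow_le_pow_right₀ hG h.le
    nlinarith
  have hLs : L / s ≤ G ^ K := (div_le_iff₀ hs).2 hK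
  have hLs0 : 0 ≤ L / s := div_nonneg (by nlinarith [pow_pos hG0 N]) hs.le
  have hρ : 1 ≤ β / G ^ n := (one_le_div (by positivity)).2 hβ
  calc (L / s) ^ n * (β / G ^ n) ^ N ≤ (G ^ K) ^ n * (β / G ^ n) ^ K := by gcongr
    _ = β ^ K := by
        rw [← pow_mul, mul_comm K, pow_mul, ← mul_pow, mul_div_cancel₀ _ (by positivity)]

section Doubling

variable {n : ℕ} {ι : Type*} {μ : Measure (EuclideanSpace ℝ (Fin n))} {𝒜 : ι → Set (Cube n)}
  {α β G L : ℝ}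

def Cube.IsDoubling (μ : Measure (EuclideanSpace ℝ (Fin n))) (α β : ℝ) (Q : Cube n) : Prop :=
  μ (Q.dilate α).set ≤ ENNReal.ofReal β * μ Q.set

def CoversDilates (𝒜 : ι → Set (Cube n)) (α G : ℝ) : Prop :=
  ∀ Q : Cube n, 0 < Q.s → ∃ i, ∃ Q' ∈ 𝒜 i,
    (Q.dilate α).set ⊆ Q'.set ∧ α * Q.s ≤ Q'.s ∧ Q'.s ≤ G * Q.s

def nondoublingSet (μ : Measure (EuclideanSpace ℝ (Fin n))) (𝒜 : ι → Set (Cube n))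
    (α β L : ℝ) : Set (EuclideanSpace ℝ (Fin n)) :=
  {x | ∀ i, ∀ Q ∈ 𝒜 i, x ∈ Q.set → Q.s < L → ¬ Q.IsDoubling μ α β}

def stoppingCubes (𝒜 : ι → Set (Cube n)) (G L : ℝ) (E : Set (EuclideanSpace ℝ (Fin n))) :
    Set (Cube n) :=
  {T | (∃ i, T ∈ 𝒜 i) ∧ L ≤ G * T.s ∧ T.s < L ∧ (T.set ∩ E).Nonempty}

lemma coversDilates_of_covering (hn : 0 < n) {C : ℝ} (hC : 0 < C) (hα : 0 < α)
    (hG : C * α < G)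
    (hcov : ∀ (x : EuclideanSpace ℝ (Fin n)) (r : ℝ), 0 < r →
      ∃ i, ∃ Q ∈ 𝒜 i, ball x r ⊆ Q.set ∧ diam Q.set ≤ C * (2 * r)) :
    CoversDilates 𝒜 α G := by
  intro Q hs
  have hsqrt : 0 < √(n : ℝ) := Real.sqrt_pos.2 (Nat.cast_pos.2 hn)
  have hG0 : 0 < G := (mul_pos hC hα).trans hG
  obtain ⟨i, Q', hQ', hball, hdiam⟩ := hcov Q.center (G * Q.s * √n / (2 * C)) (by positivity)
  have hsub : (Q.dilate α).set ⊆ Q'.set := by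
    refine (Cube.set_subset_closedBall (by rw [Cube.dilate_s]; positivity)).trans ?_
    rw [Cube.center_dilate]
    refine (closedBall_subset_ball ?_).trans hball
    rw [Cube.dilate_s, div_lt_div_iff₀ two_pos (by positivity)]
    nlinarith [mul_pos hs hsqrt]
  have hs' : 0 < Q'.s :=
    Cube.side_pos_of_nonempty hn ⟨Q.center, hball (mem_ball_self (by positivity))⟩
  refine ⟨i, Q', hQ', hsub, ?_, ?_⟩
  · have := diam_mono hsub (Cube.isBounded_set hs'.le)
    rw [Cube.diam_set (by rw [Cube.dilate_s]; positivity), Cube.diam_set hs',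
      Cube.dilate_s] at this
    exact le_of_mul_le_mul_right this hsqrt
  · rw [Cube.diam_set hs', show C * (2 * (G * Q.s * √n / (2 * C))) = G * Q.s * √n by
      field_simp] at hdiam
    exact le_of_mul_le_mul_right hdiam hsqrt

lemma exists_stopping_cube (hα : 1 < α) (hpar : CoversDilates 𝒜 α G)
    {x : EuclideanSpace ℝ (Fin n)} (hx : x ∈ nondoublingSet μ 𝒜 α β L) {i : ι} {Q : Cube n}
    (hQ : Q ∈ 𝒜 i) (hxQ : x ∈ Q.set) (hs : 0 < Q.s) (hsL : Q.s < L) :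
    ∃ K : ℕ, ∃ i', ∃ T ∈ 𝒜 i', Q.set ⊆ T.set ∧ L ≤ G * T.s ∧ T.s < L ∧ L ≤ G ^ K * Q.s ∧
      ENNReal.ofReal β ^ K * μ Q.set ≤ ENNReal.ofReal β * μ T.set := by
  -- each step multiplies the side by at least `α`, so `N` bounds the number of steps
  obtain ⟨N, hN⟩ := pow_unbounded_of_one_lt (L / Q.s) hα
  replace hN : L ≤ α ^ N * Q.s := (div_le_iff₀ hs).1 hN.le
  induction N generalizing i Q with
  | zero => simp only [pow_zero, one_mul] at hN; linarith
  | succ N ih =>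
    obtain ⟨i', Q', hQ', hsub, hαQ', hQ'G⟩ := hpar Q hs
    have hQQ' : Q.set ⊆ Q'.set := (Cube.subset_dilate hs.le hα.le).trans hsub
    have hgrow : ENNReal.ofReal β * μ Q.set ≤ μ Q'.set :=
      (not_le.1 (hx i Q hQ hxQ hsL)).le.trans (measure_mono hsub)
    by_cases hQ'L : L ≤ Q'.s
    · exact ⟨1, i, Q, hQ, subset_rfl, hQ'L.trans hQ'G, hsL, by simpa using hQ'L.trans hQ'G,
        by simp⟩
    push Not at hQ'L
    obtain ⟨K, i'', T, hT, hQ'T, hLT, hTL, hK, hμ⟩ := ih hQ' (hQQ' hxQ) (by nlinarith) hQ'L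
      (by rw [pow_succ] at hN; nlinarith [pow_pos (zero_lt_one.trans hα) N])
    refine ⟨K + 1, i'', T, hT, hQQ'.trans hQ'T, hLT, hTL, ?_, ?_⟩
    · calc L ≤ G ^ K * Q'.s := hK
        _ ≤ G ^ K * (G * Q.s) := by
          have : α ≤ G := le_of_mul_le_mul_right (hαQ'.trans hQ'G) hs
          have : 0 ≤ G := by linarith
          gcongr
        _ = G ^ (K + 1) * Q.s := by ring
    · calc ENNReal.ofReal β ^ (K + 1) * μ Q.set
          = ENNReal.ofReal β ^ K * (ENNReal.ofReal β * μ Q.set) := by ring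
        _ ≤ ENNReal.ofReal β ^ K * μ Q'.set := by gcongr
        _ ≤ ENNReal.ofReal β * μ T.set := hμ

lemma stoppingCubes_finite [Finite ι] (hfil : ∀ i, IsDyadicFiltration (𝒜 i)) (hG : 0 < G)
    (hL : 0 < L) {E : Set (EuclideanSpace ℝ (Fin n))} (hbdd : Bornology.IsBounded E) :
    (stoppingCubes 𝒜 G L E).Finite := by
  set W := cthickening (L * √n) E
  have hW : ∀ T ∈ stoppingCubes 𝒜 G L E, T.set ⊆ W := by
    rintro T ⟨⟨i, hT⟩, -, hTL, y, hyT, hyE⟩ z hz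
    have hs := (hfil i).side_pos hT
    refine mem_cthickening_of_dist_le z y _ E hyE ?_
    calc dist z y ≤ diam T.set := dist_le_diam_of_mem (Cube.isBounded_set hs.le) hz hyT
      _ ≤ L * √n := by rw [Cube.diam_set hs]; gcongr
  have hWvol : volume W ≠ ⊤ := hbdd.cthickening.measure_lt_top.ne
  refine Set.Finite.subset (Set.finite_iUnion fun i =>
    (finite_setOf_two_zpow_mem_Icc (div_pos hL hG) (b := L)).biUnion fun k _ =>
      Cube.finite_of_pairwiseDisjoint (zpow_pos two_pos (-k)) (fun T hT => hT.1.2)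
        ((hfil i).pairwiseDisjoint k |>.subset fun T hT => hT.1) (fun T hT => hT.2) hWvol
      (𝒮 := {T | (T ∈ 𝒜 i ∧ T.s = (2 : ℝ) ^ (-k)) ∧ T.set ⊆ W})) ?_
  intro T hT
  have ⟨⟨i, hTi⟩, hLT, hTL, _⟩ := hT
  obtain ⟨k, hk⟩ := (hfil i).1 T hTi
  refine Set.mem_iUnion.2 ⟨i, Set.mem_biUnion (x := k) ⟨?_, ?_⟩ ⟨⟨hTi, hk⟩, hW T hT⟩⟩
  · rw [← hk, div_le_iff₀ hG, mul_comm]; exact hLT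
  · rw [← hk]; exact hTL.le

lemma mul_measure_le_sum_stoppingCubes (hfil : ∀ i, IsDyadicFiltration (𝒜 i)) (i₀ : ι)
    (hα : 1 < α) (hpar : CoversDilates 𝒜 α G) {E : Set (EuclideanSpace ℝ (Fin n))}
    (hE : E ⊆ nondoublingSet μ 𝒜 α β L) (h𝒯 : (stoppingCubes 𝒜 G L E).Finite) {k : ℤ}
    (hkL : (2 : ℝ) ^ (-k) < L) {c : ENNReal}
    (hc : ∀ K : ℕ, L ≤ G ^ K * 2 ^ (-k) → c ≤ ENNReal.ofReal β ^ K) :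
    c * ENNReal.ofReal (2 ^ (-k)) ^ n * μ E ≤
      ENNReal.ofReal L ^ n * (ENNReal.ofReal β * ∑ T ∈ h𝒯.toFinset, μ T.set) := by
  set S : Cube n → Set (Cube n) := fun T => {Q | (Q ∈ 𝒜 i₀ ∧ Q.s = (2 : ℝ) ^ (-k)) ∧
    Q.set ⊆ T.set ∧ c * μ Q.set ≤ ENNReal.ofReal β * μ T.set}
  have hcover : E ⊆ ⋃ T ∈ h𝒯.toFinset, ⋃ Q ∈ S T, Q.set := by
    intro x hx
    obtain ⟨Q, ⟨hQ, hQs, hxQ⟩, -⟩ := (hfil i₀).2.1 k x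
    obtain ⟨K, i, T, hT, hQT, hLT, hTL, hK, hμ⟩ :=
      exists_stopping_cube hα hpar (hE hx) hQ hxQ ((hfil i₀).side_pos hQ) (hQs ▸ hkL)
    refine Set.mem_biUnion (h𝒯.mem_toFinset.2 ⟨⟨i, hT⟩, hLT, hTL, x, hQT hxQ, hx⟩)
      (Set.mem_biUnion ⟨⟨hQ, hQs⟩, hQT, ?_⟩ hxQ)
    exact (mul_le_mul_left (hc K (hQs ▸ hK)) _).trans hμ
  have hpiece : ∀ T ∈ stoppingCubes 𝒜 G L E,
      c * ENNReal.ofReal (2 ^ (-k)) ^ n * μ (⋃ Q ∈ S T, Q.set) ≤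
        ENNReal.ofReal L ^ n * (ENNReal.ofReal β * μ T.set) := by
    intro T ⟨_, _, hTL, _⟩
    refine (Cube.mul_measure_biUnion_le (zpow_pos two_pos (-k)) (fun Q hQ => hQ.1.2)
      ((hfil i₀).pairwiseDisjoint k |>.subset fun Q hQ => hQ.1) (fun Q hQ => hQ.2.1)
      (by simp [Cube.volume_set]) fun Q hQ => hQ.2.2).trans ?_
    rw [Cube.volume_set]
    gcongr
  calc c * ENNReal.ofReal (2 ^ (-k)) ^ n * μ E
      ≤ c * ENNReal.ofReal (2 ^ (-k)) ^ n * ∑ T ∈ h𝒯.toFinset, μ (⋃ Q ∈ S T, Q.set) := by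
        gcongr
        exact (measure_mono hcover).trans (measure_biUnion_finset_le _ _)
    _ ≤ ∑ T ∈ h𝒯.toFinset, ENNReal.ofReal L ^ n * (ENNReal.ofReal β * μ T.set) := by
        rw [Finset.mul_sum]
        exact Finset.sum_le_sum fun T hT => hpiece T (h𝒯.mem_toFinset.1 hT)
    _ = ENNReal.ofReal L ^ n * (ENNReal.ofReal β * ∑ T ∈ h𝒯.toFinset, μ T.set) := by
        rw [Finset.mul_sum, Finset.mul_sum]


lemma pow_mul_measure_le_sum_stoppingCubes (hfil : ∀ i, IsDyadicFiltration (𝒜 i)) (i₀ : ι)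
    (hα : 1 < α) (hG : 1 ≤ G) (hGβ : G ^ n ≤ β) (hpar : CoversDilates 𝒜 α G) (hL : 0 < L)
    {E : Set (EuclideanSpace ℝ (Fin n))} (hE : E ⊆ nondoublingSet μ 𝒜 α β L)
    (h𝒯 : (stoppingCubes 𝒜 G L E).Finite) (N : ℕ) :
    ENNReal.ofReal (β / G ^ n) ^ N * (ENNReal.ofReal L ^ n * μ E) ≤
      ENNReal.ofReal L ^ n * (ENNReal.ofReal β * ∑ T ∈ h𝒯.toFinset, μ T.set) := by
  have hG0 : 0 < G := zero_lt_one.trans_le hG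
  have hβ : 0 < β := (pow_pos hG0 n).trans_le hGβ
  obtain ⟨p, hp⟩ := exists_pow_lt_of_lt_one (div_pos hL (pow_pos hG0 N))
    (by norm_num : (2⁻¹ : ℝ) < 1)
  have hpL : G ^ N * 2 ^ (-(p : ℤ)) < L := by
    rw [zpow_neg, zpow_natCast, ← inv_pow, mul_comm, ← lt_div_iff₀ (by positivity)]
    exact hp
  have hps : 0 < (2 : ℝ) ^ (-(p : ℤ)) := zpow_pos two_pos _
  convert mul_measure_le_sum_stoppingCubes hfil i₀ hα hpar hE h𝒯
    (lt_of_le_of_lt (le_mul_of_one_le_left hps.le (one_le_pow₀ hG)) hpL)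
    (c := ENNReal.ofReal ((L / 2 ^ (-(p : ℤ))) ^ n * (β / G ^ n) ^ N))
    (fun K hK => by
      rw [← ENNReal.ofReal_pow hβ.le]
      exact ENNReal.ofReal_le_ofReal (div_pow_mul_pow_le_pow hG hps hGβ hpL hK)) using 1
  rw [← ENNReal.ofReal_pow hL.le, ← ENNReal.ofReal_pow hps.le,
    ← ENNReal.ofReal_pow (by positivity), ← ENNReal.ofReal_mul (by positivity), ← mul_assoc,
    ← ENNReal.ofReal_mul (by positivity)]
  congr 2
  rw [mul_right_comm, ← mul_pow, div_mul_cancel₀ _ hps.ne', mul_comm]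

lemma measure_nondoublingSet_inter_eq_zero [Finite ι] (hfil : ∀ i, IsDyadicFiltration (𝒜 i))
    (hα : 1 < α) (hGβ : G ^ n < β) (hpar : CoversDilates 𝒜 α G) (hL : 0 < L)
    {B : Set (EuclideanSpace ℝ (Fin n))} (hB : Bornology.IsBounded B) :
    μ (nondoublingSet μ 𝒜 α β L ∩ B) = 0 := by
  -- the unit cube has a parent in some `𝒜 i₀`, and `α ≤ G`
  obtain ⟨i₀, Q₀, -, -, hαQ₀, hQ₀G⟩ := hpar ⟨0, 1⟩ one_pos
  have hG : 1 < G := by dsimp only at hαQ₀ hQ₀G; linarith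
  have hβ : 0 < β := (pow_pos (zero_lt_one.trans hG) n).trans hGβ
  set E := nondoublingSet μ 𝒜 α β L ∩ B
  have h𝒯 : (stoppingCubes 𝒜 G L E).Finite :=
    stoppingCubes_finite hfil (zero_lt_one.trans hG) hL (hB.subset Set.inter_subset_right)
  -- a cube of infinite measure is doubling, and a stopping cube is not
  have hM : ∑ T ∈ h𝒯.toFinset, μ T.set ≠ ⊤ := by
    refine ENNReal.sum_ne_top.2 fun T hT htop => ?_
    obtain ⟨⟨i, hTi⟩, -, hTL, y, hyT, hyE, -⟩ := h𝒯.mem_toFinset.1 hT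
    refine hyE i T hTi hyT hTL ?_
    rw [Cube.IsDoubling, htop, ENNReal.mul_top (ENNReal.ofReal_pos.2 hβ).ne']
    exact le_top
  have h0 := ENNReal.eq_zero_of_forall_pow_mul_le
    (ENNReal.one_lt_ofReal.2 ((one_lt_div (pow_pos (zero_lt_one.trans hG) n)).2 hGβ))
    (by finiteness) (pow_mul_measure_le_sum_stoppingCubes hfil i₀ hα hG.le hGβ.le hpar hL
      Set.inter_subset_left h𝒯)
  exact (mul_eq_zero.1 h0).resolve_left (pow_ne_zero n (ENNReal.ofReal_pos.2 hL).ne')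

lemma ae_exists_doubling_cube [Finite ι] (hfil : ∀ i, IsDyadicFiltration (𝒜 i))
    (hα : 1 < α) (hGβ : G ^ n < β) (hpar : CoversDilates 𝒜 α G) (hL : 0 < L) :
    ∀ᵐ x ∂μ, ∃ i, ∃ Q ∈ 𝒜 i, x ∈ Q.set ∧ Q.s < L ∧ Q.IsDoubling μ α β := by
  have hnull : μ (nondoublingSet μ 𝒜 α β L) = 0 := by
    rw [← Set.inter_univ (nondoublingSet μ 𝒜 α β L), ← iUnion_closedBall_nat 0,
      Set.inter_iUnion]
    exact measure_iUnion_null fun k =>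
      measure_nondoublingSet_inter_eq_zero hfil hα hGβ hpar hL isBounded_closedBall
  filter_upwards [measure_eq_zero_iff_ae_notMem.1 hnull] with x hx
  simpa [nondoublingSet] using hx

end Doubling

/-- Lemma 1(i): for a Borel measure `μ` on `ℝⁿ`, `α > 1` and `β > (c_n α)^n`,
`μ`-almost every point lies in `(α,β)`-doubling cubes of the family `𝒜` of
Theorem A of arbitrarily small side length (`ℓ(Q_j) < 2^{-j}` for all `j`). -/
theorem stmt_10 (n : ℕ) (α β : ℝ) (hα : 1 < α) (hβ : (cN n * α) ^ n < β)
    (μ : Measure (EuclideanSpace ℝ (Fin n)))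
    (𝒜 : Fin (n + 1) → Set (Cube n))
    (hfil : ∀ m, IsDyadicFiltration (𝒜 m))
    (hcov : ∀ (x : EuclideanSpace ℝ (Fin n)) (r : ℝ), 0 < r →
      ∃ m, ∃ Q ∈ 𝒜 m, Metric.ball x r ⊆ Q.set ∧
        Metric.diam Q.set ≤ cN n * (2 * r)) :
    ∀ᵐ x ∂μ, ∀ j : ℕ,
      ∃ m, ∃ Q ∈ 𝒜 m, x ∈ Q.set ∧ Q.s < (2 : ℝ) ^ (-(j : ℤ)) ∧
        μ (Q.dilate α).set ≤ ENNReal.ofReal β * μ Q.set := by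
  rcases Nat.eq_zero_or_pos n with rfl | hn
  · refine ae_of_all μ fun x j => ?_
    obtain ⟨Q, ⟨hQ, hQs, hxQ⟩, -⟩ := (hfil 0).2.1 (j + 1) x
    refine ⟨0, Q, hQ, hxQ, hQs ▸ zpow_lt_zpow_right₀ one_lt_two (by omega), ?_⟩
    rw [Q.set_eq_univ_of_dim_zero, (Q.dilate α).set_eq_univ_of_dim_zero]
    exact le_mul_of_one_le_left' (ENNReal.one_le_ofReal.2 (by simpa using hβ.le))
  · have hcN : 0 < cN n := by unfold cN pn; positivity
    obtain ⟨G, hCG, hGβ⟩ : ∃ G, cN n * α < G ∧ G ^ n < β :=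
      ((continuous_pow n).tendsto _ |>.eventually (gt_mem_nhds hβ)).exists_gt
    exact ae_all_iff.2 fun j => ae_exists_doubling_cube hfil hα hGβ
      (coversDilates_of_covering hn hcN (by linarith) hCG hcov) (zpow_pos two_pos _)
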